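/- arXiv:math/9404212 — 2 statements merged into one kernel-verified Lean document; each statement's English description precedes it below -/
import Mathlib

section
/- For every x = (x_1,...,x_n) on the unit sphere S^{n-1} in R^n and every real q > 0, x_n^2 = (Γ((n+q)/2) / (2 π^{(n-1)/2} Γ((q+1)/2))) · ∫_{S^{n-1}} |⟨x,ξ⟩|^q · ( ((n+q)/q) ξ_n^2 − 1/q ) dξ. -/
/-!
For unit vectors `x` and `e`, the Gaussian integrals `∫ |⟪x, y⟫| ^ q * ⟪e, y⟫ ^ 2 * exp (-‖y‖ ^ 2)`
and `∫ |⟪x, y⟫| ^ q * exp (-‖y‖ ^ 2)` over `ℝⁿ` are evaluated twice. In polar coordinates the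
integrands are homogeneous of degrees `q + 2` and `q`, so each integral is a Gamma factor times
the corresponding integral over the sphere. In an orthonormal basis containing `x` the Gaussian
factorises over the coordinates, and the integrals become products of the one-dimensional moments
`∫ |t| ^ a * t ^ m * exp (-t ^ 2)`, which vanish for odd `m` and equal `Γ ((a + m + 1) / 2)` for
even `m`. Comparing the two evaluations gives the identity.
-/

open MeasureTheory Real Finset Set Metric
open scoped RealInnerProductSpace

lemma integrable_abs_rpow_mul_exp_neg_sq {s : ℝ} (hs : -1 < s) :
    Integrable fun t : ℝ => |t| ^ s * exp (-t ^ 2) := by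
  have hIoi : IntegrableOn (fun y : ℝ => y ^ (Module.finrank ℝ ℝ - 1) • (y ^ s * exp (-y ^ 2)))
      (Ioi 0) := by
    refine (integrableOn_rpow_mul_exp_neg_rpow hs two_pos).congr_fun (fun y _ => ?_)
      measurableSet_Ioi
    simp
  simpa [sq_abs] using (integrable_fun_norm_addHaar volume).2 hIoi

lemma integral_abs_rpow_mul_exp_neg_sq {s : ℝ} (hs : -1 < s) :
    ∫ t : ℝ, |t| ^ s * exp (-t ^ 2) = Gamma ((s + 1) / 2) := by
  have h := integral_comp_abs (f := fun t : ℝ => t ^ s * exp (-t ^ 2))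
  simp only [sq_abs] at h
  rw [h]
  simp_rw [← rpow_two]
  rw [integral_rpow_mul_exp_neg_rpow two_pos hs]
  ring

lemma integrable_abs_rpow_mul_pow_mul_exp_neg_sq {a : ℝ} (ha : -1 < a) (m : ℕ) :
    Integrable fun t : ℝ => |t| ^ a * t ^ m * exp (-t ^ 2) := by
  have hs : -1 < a + m := by linarith [m.cast_nonneg (α := ℝ)]
  refine (integrable_abs_rpow_mul_exp_neg_sq hs).mono' (by fun_prop) ?_
  filter_upwards [Measure.ae_ne volume 0] with t ht
  rw [rpow_add_natCast (abs_ne_zero.2 ht), norm_mul, norm_mul, norm_pow, Real.norm_eq_abs,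
    Real.norm_eq_abs, Real.norm_eq_abs, abs_of_nonneg (rpow_nonneg (abs_nonneg t) a),
    abs_of_pos (exp_pos _)]

lemma integral_abs_rpow_mul_pow_mul_exp_neg_sq {a : ℝ} (ha : -1 < a) (m : ℕ) :
    ∫ t : ℝ, |t| ^ a * t ^ m * exp (-t ^ 2) = if Even m then Gamma ((a + m + 1) / 2) else 0 := by
  split_ifs with hm
  · rw [← integral_abs_rpow_mul_exp_neg_sq (by linarith [m.cast_nonneg (α := ℝ)] : -1 < a + m)]
    refine integral_congr_ae ?_
    filter_upwards [Measure.ae_ne volume 0] with t ht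
    rw [rpow_add_natCast (abs_ne_zero.2 ht), hm.pow_abs]
  · have hodd := integral_neg_eq_self (fun t : ℝ => |t| ^ a * t ^ m * exp (-t ^ 2)) volume
    simp only [abs_neg, neg_sq, (Nat.not_even_iff_odd.1 hm).neg_pow, neg_mul, mul_neg,
      integral_neg] at hodd
    linarith

section GaussianPi

variable {ι : Type*} [Fintype ι]

lemma integrable_prod_abs_rpow_mul_pow_mul_exp_neg_sq {a : ι → ℝ} (ha : ∀ k, -1 < a k)
    (m : ι → ℕ) :
    Integrable fun w : ι → ℝ => ∏ k, |w k| ^ a k * w k ^ m k * exp (-w k ^ 2) :=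
  Integrable.fintype_prod (f := fun k t => |t| ^ a k * t ^ m k * exp (-t ^ 2)) fun k =>
    integrable_abs_rpow_mul_pow_mul_exp_neg_sq (ha k) (m k)

lemma integral_prod_abs_rpow_mul_pow_mul_exp_neg_sq {a : ι → ℝ} (ha : ∀ k, -1 < a k)
    (m : ι → ℕ) :
    ∫ w : ι → ℝ, ∏ k, |w k| ^ a k * w k ^ m k * exp (-w k ^ 2) =
      ∏ k, if Even (m k) then Gamma ((a k + m k + 1) / 2) else 0 := by
  rw [integral_fintype_prod_volume_eq_prod (fun k t => |t| ^ a k * t ^ m k * exp (-t ^ 2))]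
  exact prod_congr rfl fun k _ => integral_abs_rpow_mul_pow_mul_exp_neg_sq (ha k) (m k)

lemma integral_prod_abs_rpow_mul_exp_neg_sq {a : ι → ℝ} (ha : ∀ k, -1 < a k) :
    ∫ w : ι → ℝ, ∏ k, |w k| ^ a k * exp (-w k ^ 2) = ∏ k, Gamma ((a k + 1) / 2) := by
  simpa using integral_prod_abs_rpow_mul_pow_mul_exp_neg_sq ha 0

variable [DecidableEq ι]

lemma mul_eq_prod_pow_ite_add_ite (w : ι → ℝ) (i j : ι) :
    w i * w j = ∏ k, w k ^ ((if k = i then 1 else 0) + (if k = j then 1 else 0)) := by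
  simp only [pow_add, prod_mul_distrib, pow_ite, pow_one, pow_zero, prod_ite_eq',
    Finset.mem_univ, if_true]

lemma prod_abs_rpow_mul_exp_neg_sq_mul_mul (a w : ι → ℝ) (i j : ι) :
    (∏ k, |w k| ^ a k * exp (-w k ^ 2)) * (w i * w j) =
      ∏ k, |w k| ^ a k * w k ^ ((if k = i then 1 else 0) + (if k = j then 1 else 0)) *
        exp (-w k ^ 2) := by
  rw [mul_eq_prod_pow_ite_add_ite, ← prod_mul_distrib]
  exact prod_congr rfl fun k _ => by ring

lemma integral_prod_abs_rpow_mul_exp_neg_sq_mul_mul {a : ι → ℝ} (ha : ∀ k, -1 < a k) (i j : ι) :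
    ∫ w : ι → ℝ, (∏ k, |w k| ^ a k * exp (-w k ^ 2)) * (w i * w j) =
      if i = j then (a i + 1) / 2 * ∏ k, Gamma ((a k + 1) / 2) else 0 := by
  simp_rw [prod_abs_rpow_mul_exp_neg_sq_mul_mul, integral_prod_abs_rpow_mul_pow_mul_exp_neg_sq ha]
  by_cases hij : i = j
  · subst hij
    rw [if_pos rfl]
    have hfactor : ∀ k, (if Even ((if k = i then 1 else 0) + (if k = i then 1 else 0)) then
        Gamma ((a k + (((if k = i then 1 else 0) + (if k = i then 1 else 0) : ℕ) : ℝ) + 1) / 2)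
        else 0) = (if k = i then (a k + 1) / 2 else 1) * Gamma ((a k + 1) / 2) := by
      intro k
      by_cases hki : k = i
      · have hak : (a k + 1) / 2 ≠ 0 := by linarith [ha k]
        simp only [hki, if_true, Nat.reduceAdd, even_two]
        rw [← hki, ← Gamma_add_one hak]
        push_cast
        ring_nf
      · simp [hki]
    simp_rw [hfactor, prod_mul_distrib, prod_ite_eq', Finset.mem_univ, if_true]
  · rw [if_neg hij]
    exact prod_eq_zero (Finset.mem_univ i) (by simp [hij])

lemma integral_prod_abs_rpow_mul_exp_neg_sq_mul_sum_mul_sq {a : ι → ℝ} (ha : ∀ k, -1 < a k)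
    (c : ι → ℝ) :
    ∫ w : ι → ℝ, (∏ k, |w k| ^ a k * exp (-w k ^ 2)) * (∑ k, c k * w k) ^ 2 =
      (∑ k, c k ^ 2 * (a k + 1)) / 2 * ∏ k, Gamma ((a k + 1) / 2) := by
  have hint : ∀ i j, Integrable fun w : ι → ℝ =>
      c i * c j * ((∏ k, |w k| ^ a k * exp (-w k ^ 2)) * (w i * w j)) := fun i j => by
    simp_rw [prod_abs_rpow_mul_exp_neg_sq_mul_mul]
    exact (integrable_prod_abs_rpow_mul_pow_mul_exp_neg_sq ha _).const_mul _
  have hexpand : ∀ w : ι → ℝ, (∏ k, |w k| ^ a k * exp (-w k ^ 2)) * (∑ k, c k * w k) ^ 2 =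
      ∑ i, ∑ j, c i * c j * ((∏ k, |w k| ^ a k * exp (-w k ^ 2)) * (w i * w j)) := by
    intro w
    simp only [sq, mul_sum, sum_mul]
    exact sum_congr rfl fun i _ => sum_congr rfl fun j _ => by ring
  simp_rw [hexpand]
  rw [integral_finsetSum _ fun i _ => integrable_finsetSum _ fun j _ => hint i j]
  simp_rw [integral_finsetSum _ fun j _ => hint _ j, integral_const_mul,
    integral_prod_abs_rpow_mul_exp_neg_sq_mul_mul ha, mul_ite, mul_zero, sum_ite_eq,
    Finset.mem_univ, if_true, sum_div, sum_mul]
  exact sum_congr rfl fun i _ => by ring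

lemma abs_rpow_mul_exp_neg_sum_sq_eq_prod (i0 : ι) (q : ℝ) (w : ι → ℝ) :
    |w i0| ^ q * exp (-∑ k, w k ^ 2) =
      ∏ k, |w k| ^ (if k = i0 then q else 0) * exp (-w k ^ 2) := by
  rw [prod_mul_distrib, ← exp_sum, sum_neg_distrib,
    Fintype.prod_eq_single (f := fun k => |w k| ^ (if k = i0 then q else 0)) i0
      fun k hk => by simp [hk], if_pos rfl]

lemma prod_gamma_ite_add_one_div_two (i0 : ι) (q : ℝ) :
    ∏ k, Gamma (((if k = i0 then q else 0) + 1) / 2) =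
      Gamma ((q + 1) / 2) * π ^ (((Fintype.card ι : ℝ) - 1) / 2) := by
  have hcard : 1 ≤ Fintype.card ι := Fintype.card_pos_iff.2 ⟨i0⟩
  rw [← mul_prod_erase univ _ (mem_univ i0), if_pos rfl,
    prod_congr rfl fun k hk => by rw [if_neg (ne_of_mem_erase hk)], prod_const,
    card_erase_of_mem (mem_univ _), card_univ, zero_add, Gamma_one_half_eq, sqrt_eq_rpow,
    ← rpow_natCast, ← rpow_mul pi_pos.le, Nat.cast_sub hcard, Nat.cast_one]
  ring_nf

end GaussianPi

section Rotation

variable {E : Type*} [NormedAddCommGroup E] [InnerProductSpace ℝ E]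

lemma exists_orthonormalBasis_apply_eq [FiniteDimensional ℝ E] {x : E} (hx : ‖x‖ = 1) :
    ∃ (s : Finset E) (b : OrthonormalBasis s ℝ E) (i0 : s), b i0 = x := by
  classical
  have hv : Orthonormal ℝ ((↑) : ({x} : Set E) → E) := by
    rw [orthonormal_subtype_iff_ite]
    rintro v rfl w rfl
    simp [hx]
  obtain ⟨s, b, hxs, hb⟩ := hv.exists_orthonormalBasis_extension
  exact ⟨s, b, ⟨x, hxs rfl⟩, by rw [hb]⟩

variable {ι : Type*} [Fintype ι]

lemma OrthonormalBasis.integral_comp_repr_symm_toLp [FiniteDimensional ℝ E] [MeasurableSpace E]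
    [BorelSpace E] (b : OrthonormalBasis ι ℝ E) (F : E → ℝ) :
    ∫ w : ι → ℝ, F (b.repr.symm (WithLp.toLp 2 w)) = ∫ y, F y :=
  ((EuclideanSpace.volume_preserving_symm_measurableEquiv_toLp ι).symm.integral_comp'
    (fun z => F (b.repr.symm z))).trans (b.measurePreserving_measurableEquiv.symm.integral_comp' F)

lemma OrthonormalBasis.inner_apply_repr_symm_toLp (b : OrthonormalBasis ι ℝ E) (i : ι)
    (w : ι → ℝ) : ⟪b i, b.repr.symm (WithLp.toLp 2 w)⟫ = w i := by
  rw [← b.repr_apply_apply, LinearIsometryEquiv.apply_symm_apply, PiLp.toLp_apply]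

lemma OrthonormalBasis.inner_repr_symm_toLp (b : OrthonormalBasis ι ℝ E) (u : E) (w : ι → ℝ) :
    ⟪u, b.repr.symm (WithLp.toLp 2 w)⟫ = ∑ k, b.repr u k * w k := by
  rw [← b.sum_inner_mul_inner]
  refine sum_congr rfl fun k _ => ?_
  rw [real_inner_comm, ← b.repr_apply_apply, b.inner_apply_repr_symm_toLp]

lemma OrthonormalBasis.norm_repr_symm_toLp_sq (b : OrthonormalBasis ι ℝ E) (w : ι → ℝ) :
    ‖b.repr.symm (WithLp.toLp 2 w)‖ ^ 2 = ∑ k, w k ^ 2 := by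
  simp [EuclideanSpace.norm_sq_eq]

variable [FiniteDimensional ℝ E] [MeasurableSpace E] [BorelSpace E]

theorem integral_abs_inner_rpow_mul_exp_neg_norm_sq {x : E} (hx : ‖x‖ = 1) {q : ℝ}
    (hq : -1 < q) :
    ∫ y : E, |⟪x, y⟫| ^ q * exp (-‖y‖ ^ 2) =
      Gamma ((q + 1) / 2) * π ^ (((Module.finrank ℝ E : ℝ) - 1) / 2) := by
  classical
  obtain ⟨s, b, i0, rfl⟩ := exists_orthonormalBasis_apply_eq hx
  rw [← b.integral_comp_repr_symm_toLp]
  simp_rw [b.inner_apply_repr_symm_toLp, b.norm_repr_symm_toLp_sq,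
    abs_rpow_mul_exp_neg_sum_sq_eq_prod i0]
  rw [integral_prod_abs_rpow_mul_exp_neg_sq fun k => by split_ifs <;> linarith,
    prod_gamma_ite_add_one_div_two, Module.finrank_eq_card_basis b.toBasis]

theorem integral_abs_inner_rpow_mul_inner_sq_mul_exp_neg_norm_sq {x : E} (hx : ‖x‖ = 1)
    (u : E) {q : ℝ} (hq : -1 < q) :
    ∫ y : E, |⟪x, y⟫| ^ q * ⟪u, y⟫ ^ 2 * exp (-‖y‖ ^ 2) =
      (‖u‖ ^ 2 + q * ⟪x, u⟫ ^ 2) / 2 *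
        (Gamma ((q + 1) / 2) * π ^ (((Module.finrank ℝ E : ℝ) - 1) / 2)) := by
  classical
  obtain ⟨s, b, i0, rfl⟩ := exists_orthonormalBasis_apply_eq hx
  rw [← b.integral_comp_repr_symm_toLp]
  simp_rw [b.inner_apply_repr_symm_toLp, b.inner_repr_symm_toLp, b.norm_repr_symm_toLp_sq,
    mul_right_comm _ (_ ^ 2), abs_rpow_mul_exp_neg_sum_sq_eq_prod i0]
  have hnorm : ∑ k, b.repr u k ^ 2 = ‖u‖ ^ 2 := by
    rw [← b.repr.norm_map u, EuclideanSpace.norm_sq_eq]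
    simp
  rw [integral_prod_abs_rpow_mul_exp_neg_sq_mul_sum_mul_sq fun k => by split_ifs <;> linarith,
    prod_gamma_ite_add_one_div_two, Module.finrank_eq_card_basis b.toBasis]
  simp_rw [mul_add, mul_one, sum_add_distrib, hnorm, mul_ite, mul_zero, sum_ite_eq',
    Finset.mem_univ, if_true, b.repr_apply_apply]
  ring

end Rotation

section Polar

lemma integral_volumeIoiPow (n : ℕ) (f : ℝ → ℝ) :
    ∫ r : Ioi (0 : ℝ), f r ∂Measure.volumeIoiPow n = ∫ r in Ioi (0 : ℝ), r ^ n * f r := by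
  simp only [Measure.volumeIoiPow, ENNReal.ofReal]
  rw [integral_withDensity_eq_integral_smul (measurable_subtype_coe.pow_const _).real_toNNReal,
    integral_subtype_comap measurableSet_Ioi fun r => (r ^ n).toNNReal • f r]
  refine setIntegral_congr_fun measurableSet_Ioi fun r hr => ?_
  rw [NNReal.smul_def, Real.coe_toNNReal _ (pow_nonneg (le_of_lt hr) _), smul_eq_mul]

lemma integral_Ioi_pow_mul_rpow_mul_exp_neg_sq (m : ℕ) {s : ℝ} (hs : -1 < m + s) :
    ∫ r in Ioi (0 : ℝ), r ^ m * (r ^ s * exp (-r ^ 2)) = Gamma ((m + s + 1) / 2) / 2 := by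
  rw [setIntegral_congr_fun measurableSet_Ioi fun r (hr : 0 < r) => by
      rw [← mul_assoc, ← rpow_natCast, ← rpow_add hr, ← rpow_two],
    integral_rpow_mul_exp_neg_rpow two_pos hs]
  ring

variable {E : Type*} [NormedAddCommGroup E] [NormedSpace ℝ E] [FiniteDimensional ℝ E]
  [MeasurableSpace E] [BorelSpace E] [Nontrivial E] (μ : Measure E) [μ.IsAddHaarMeasure]

theorem integral_mul_exp_neg_norm_sq_of_homogeneous {g : E → ℝ} {s : ℝ}
    (hs : 0 < (Module.finrank ℝ E : ℝ) + s) (hg : ∀ r : ℝ, 0 < r → ∀ y, g (r • y) = r ^ s * g y) :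
    ∫ y, g y * exp (-‖y‖ ^ 2) ∂μ =
      Gamma ((Module.finrank ℝ E + s) / 2) / 2 * ∫ ξ, g ξ ∂μ.toSphere := by
  have hpolar : ∀ x : ({0}ᶜ : Set E), g x * exp (-‖(x : E)‖ ^ 2) =
      g (homeomorphUnitSphereProd E x).1 *
        ((homeomorphUnitSphereProd E x).2 ^ s * exp (-(homeomorphUnitSphereProd E x).2 ^ 2)) := by
    rintro ⟨x, hx⟩
    have hx' : 0 < ‖x‖ := norm_pos_iff.2 hx
    have hgx : g x = ‖x‖ ^ s * g (‖x‖⁻¹ • x) := by rw [← hg _ hx', smul_inv_smul₀ hx'.ne']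
    simp only [homeomorphUnitSphereProd_apply_fst_coe, homeomorphUnitSphereProd_apply_snd_coe,
      hgx]
    ring
  calc ∫ y, g y * exp (-‖y‖ ^ 2) ∂μ
      = ∫ x : ({0}ᶜ : Set E), g x * exp (-‖(x : E)‖ ^ 2) ∂μ.comap (↑) := by
        rw [integral_subtype_comap (measurableSet_singleton _).compl
          (fun y => g y * exp (-‖y‖ ^ 2)), restrict_compl_singleton]
    _ = ∫ p : sphere (0 : E) 1 × Ioi (0 : ℝ), g p.1 * (p.2 ^ s * exp (-(p.2 : ℝ) ^ 2))
          ∂μ.toSphere.prod (.volumeIoiPow (Module.finrank ℝ E - 1)) := by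
        simp_rw [hpolar]
        exact μ.measurePreserving_homeomorphUnitSphereProd.integral_comp
          (Homeomorph.measurableEmbedding _) fun p => g p.1 * (p.2 ^ s * exp (-(p.2 : ℝ) ^ 2))
    _ = (∫ ξ, g ξ ∂μ.toSphere) *
          ∫ r in Ioi (0 : ℝ), r ^ (Module.finrank ℝ E - 1) * (r ^ s * exp (-r ^ 2)) := by
        rw [integral_prod_mul (fun ξ : sphere (0 : E) 1 => g ξ)
            (fun r : Ioi (0 : ℝ) => (r : ℝ) ^ s * exp (-(r : ℝ) ^ 2)),
          integral_volumeIoiPow _ fun r => r ^ s * exp (-r ^ 2)]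
    _ = _ := by
        have hdim : 1 ≤ Module.finrank ℝ E := Module.finrank_pos
        rw [integral_Ioi_pow_mul_rpow_mul_exp_neg_sq _ (by push_cast [hdim]; linarith),
          Nat.cast_sub hdim]
        push_cast
        ring_nf

end Polar

section Sphere

variable {E : Type*} [NormedAddCommGroup E] [InnerProductSpace ℝ E]

lemma abs_inner_rpow_smul_right (x : E) {r : ℝ} (hr : 0 < r) (y : E) (q : ℝ) :
    |⟪x, r • y⟫| ^ q = r ^ q * |⟪x, y⟫| ^ q := by
  rw [real_inner_smul_right, abs_mul, abs_of_pos hr, mul_rpow hr.le (abs_nonneg _)]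

variable [FiniteDimensional ℝ E] [MeasurableSpace E] [BorelSpace E]

theorem integral_sphere_abs_inner_rpow {x : E} (hx : ‖x‖ = 1) {q : ℝ} (hq : -1 < q) :
    ∫ ξ : sphere (0 : E) 1, |⟪x, (ξ : E)⟫| ^ q ∂(volume : Measure E).toSphere =
      2 * Gamma ((q + 1) / 2) * π ^ (((Module.finrank ℝ E : ℝ) - 1) / 2) /
        Gamma ((Module.finrank ℝ E + q) / 2) := by
  have : Nontrivial E := nontrivial_of_ne x 0 (by rintro rfl; simp at hx)
  have hdim : (1 : ℝ) ≤ Module.finrank ℝ E := by exact_mod_cast Module.finrank_pos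
  have h := integral_mul_exp_neg_norm_sq_of_homogeneous volume (g := fun y => |⟪x, y⟫| ^ q)
    (by linarith) fun r hr y => abs_inner_rpow_smul_right x hr y q
  rw [integral_abs_inner_rpow_mul_exp_neg_norm_sq hx hq] at h
  rw [eq_div_iff (Gamma_pos_of_pos (by linarith)).ne']
  linear_combination -2 * h

theorem integral_sphere_abs_inner_rpow_mul_inner_sq {x : E} (hx : ‖x‖ = 1) (u : E) {q : ℝ}
    (hq : -1 < q) :
    ∫ ξ : sphere (0 : E) 1, |⟪x, (ξ : E)⟫| ^ q * ⟪u, (ξ : E)⟫ ^ 2 ∂(volume : Measure E).toSphere =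
      (‖u‖ ^ 2 + q * ⟪x, u⟫ ^ 2) * Gamma ((q + 1) / 2) *
          π ^ (((Module.finrank ℝ E : ℝ) - 1) / 2) /
        Gamma ((Module.finrank ℝ E + q) / 2 + 1) := by
  have : Nontrivial E := nontrivial_of_ne x 0 (by rintro rfl; simp at hx)
  have hdim : (1 : ℝ) ≤ Module.finrank ℝ E := by exact_mod_cast Module.finrank_pos
  have h := integral_mul_exp_neg_norm_sq_of_homogeneous volume
    (g := fun y => |⟪x, y⟫| ^ q * ⟪u, y⟫ ^ 2) (s := q + 2) (by linarith) fun r hr y => by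
      rw [abs_inner_rpow_smul_right x hr, real_inner_smul_right, rpow_add hr, rpow_two]
      ring
  rw [integral_abs_inner_rpow_mul_inner_sq_mul_exp_neg_norm_sq hx u hq,
    show (Module.finrank ℝ E + (q + 2)) / 2 = (Module.finrank ℝ E + q) / 2 + 1 by ring] at h
  rw [eq_div_iff (Gamma_pos_of_pos (by linarith)).ne']
  linear_combination -2 * h

theorem sq_inner_eq_integral_sphere {x e : E} (hx : ‖x‖ = 1) (he : ‖e‖ = 1) {q : ℝ}
    (hq : 0 < q) :
    ⟪x, e⟫ ^ 2 =
      Gamma ((Module.finrank ℝ E + q) / 2) /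
          (2 * π ^ (((Module.finrank ℝ E : ℝ) - 1) / 2) * Gamma ((q + 1) / 2)) *
        ∫ ξ : sphere (0 : E) 1,
          |⟪x, (ξ : E)⟫| ^ q * ((Module.finrank ℝ E + q) / q * ⟪e, (ξ : E)⟫ ^ 2 - 1 / q)
          ∂(volume : Measure E).toSphere := by
  have : Nontrivial E := nontrivial_of_ne x 0 (by rintro rfl; simp at hx)
  have hdim : (1 : ℝ) ≤ Module.finrank ℝ E := by exact_mod_cast Module.finrank_pos
  set n : ℝ := (Module.finrank ℝ E : ℝ)
  have hcont : Continuous fun ξ : sphere (0 : E) 1 => |⟪x, (ξ : E)⟫| ^ q :=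
    (by fun_prop : Continuous fun ξ : sphere (0 : E) 1 => |⟪x, (ξ : E)⟫|).rpow_const
      fun _ => Or.inr hq.le
  have hint : ∀ {f : sphere (0 : E) 1 → ℝ}, Continuous f → Integrable f volume.toSphere :=
    fun hf => hf.integrable_of_hasCompactSupport (.of_compactSpace _)
  have hIA : Integrable (fun ξ : sphere (0 : E) 1 => |⟪x, (ξ : E)⟫| ^ q * ⟪e, (ξ : E)⟫ ^ 2)
      volume.toSphere := hint (hcont.mul (by fun_prop))
  have hsplit : ∫ ξ : sphere (0 : E) 1,
      |⟪x, (ξ : E)⟫| ^ q * ((n + q) / q * ⟪e, (ξ : E)⟫ ^ 2 - 1 / q) ∂(volume : Measure E).toSphere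
      = (n + q) / q * (∫ ξ : sphere (0 : E) 1, |⟪x, (ξ : E)⟫| ^ q * ⟪e, (ξ : E)⟫ ^ 2
          ∂(volume : Measure E).toSphere)
        - 1 / q * ∫ ξ : sphere (0 : E) 1, |⟪x, (ξ : E)⟫| ^ q ∂(volume : Measure E).toSphere := by
    rw [← integral_const_mul, ← integral_const_mul,
      ← integral_sub (hIA.const_mul _) ((hint hcont).const_mul _)]
    congr 1 with ξ
    ring
  have hG : 0 < (n + q) / 2 := by linarith
  rw [hsplit, integral_sphere_abs_inner_rpow_mul_inner_sq hx e (by linarith),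
    integral_sphere_abs_inner_rpow hx (by linarith), he, Gamma_add_one hG.ne']
  have hΓ : 0 < Gamma ((n + q) / 2) := Gamma_pos_of_pos hG
  have hΓq : 0 < Gamma ((q + 1) / 2) := Gamma_pos_of_pos (by linarith)
  have hπ : 0 < π ^ ((n - 1) / 2) := rpow_pos_of_pos pi_pos _
  field_simp
  ring

end Sphere

theorem stmt1 (n : ℕ) (hn : 1 ≤ n)
    (x : EuclideanSpace ℝ (Fin n)) (hx : x ∈ Metric.sphere (0 : EuclideanSpace ℝ (Fin n)) 1)
    (q : ℝ) (hq : 0 < q) :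
    x ⟨n - 1, by omega⟩ ^ 2 =
      Real.Gamma ((n + q) / 2) / (2 * Real.pi ^ ((n - 1 : ℝ) / 2) * Real.Gamma ((q + 1) / 2)) *
        ∫ ξ : Metric.sphere (0 : EuclideanSpace ℝ (Fin n)) 1,
          |⟪x, (ξ : EuclideanSpace ℝ (Fin n))⟫| ^ q *
            (((n + q) / q) * (ξ : EuclideanSpace ℝ (Fin n)) ⟨n - 1, by omega⟩ ^ 2 - 1 / q)
          ∂(volume.toSphere) := by
  have h := sq_inner_eq_integral_sphere (mem_sphere_zero_iff_norm.1 hx)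
    ((EuclideanSpace.basisFun (Fin n) ℝ).orthonormal.1 ⟨n - 1, by omega⟩) hq
  simpa only [EuclideanSpace.basisFun_inner, EuclideanSpace.inner_basisFun_real,
    finrank_euclideanSpace_fin] using h
end

section
/- Let λ > 0 and define N_λ(x) = (x_1^2+...+x_n^2)^{1/2} · (1 + λ (x_1^2+...+x_{n-1}^2 − 2 x_n^2)/(x_1^2+...+x_n^2))^2 for x ≠ 0 in R^n, N_λ(0) = 0. Then N_λ is a norm on R^n if and only if λ ≤ 1/11. -/
/-!
Write `x = (x', xₙ)`. Then `N_λ x = F (|x'|, xₙ)`, where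
`F (u, v) = ((1 + λ) u² + (1 - 2λ) v²)² (u² + v²)^(-3/2)` is `profile λ u v` below; it is
absolutely homogeneous of degree one and even in each variable. Along a line
`t ↦ (a, b) = z + t w` avoiding the origin, the second derivative of `F` is
`Q (a, b) (b w₁ - a w₂)² (a² + b²)^(-7/2)` for a binary quartic `Q` whose coefficients are
nonnegative when `0 ≤ λ ≤ 1/11`. Hence `F` is convex, so it is subadditive and, being even,
nondecreasing in `|u|`; together with Minkowski's inequality for `x'` this gives the triangle
inequality for `N_λ`. Conversely, if `λ > 1/11` then `F (1, t) < F (1, 0)` for small `t ≠ 0`, and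
`x = e₁ + t eₙ`, `y = e₁ - t eₙ` violate `N_λ (x + y) ≤ N_λ x + N_λ y`.
-/

open Set

theorem HasDerivAt.mul_rpow_const_of_pos {h p : ℝ → ℝ} {h' p' r t : ℝ}
    (hh : HasDerivAt h h' t) (hp : HasDerivAt p p' t) (hpt : 0 < p t) :
    HasDerivAt (fun s => h s * p s ^ r) ((h' * p t + r * h t * p') * p t ^ (r - 1)) t := by
  refine (hh.mul (hp.rpow_const (p := r) (Or.inl hpt.ne'))).congr_deriv ?_
  rw [Real.rpow_sub_one hpt.ne']
  field_simp

theorem convexOn_univ_sq_mul_rpow_neg_three_halves {G G' G'' P P' P'' : ℝ → ℝ}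
    (hG : ∀ t, HasDerivAt G (G' t) t) (hG' : ∀ t, HasDerivAt G' (G'' t) t)
    (hP : ∀ t, HasDerivAt P (P' t) t) (hP' : ∀ t, HasDerivAt P' (P'' t) t)
    (hpos : ∀ t, 0 < P t)
    (hsecond : ∀ t, 0 ≤ 8 * (G' t ^ 2 + G t * G'' t) * P t ^ 2 - 24 * G t * G' t * P' t * P t
      - 6 * G t ^ 2 * P'' t * P t + 15 * G t ^ 2 * P' t ^ 2) :
    ConvexOn ℝ univ (fun t => G t ^ 2 * P t ^ (-(3 / 2) : ℝ)) := by
  let H : ℝ → ℝ := fun t => 2 * (G t * G' t) * P t - 3 / 2 * G t ^ 2 * P' t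
  have hH : ∀ t, HasDerivAt H (2 * (G' t * G' t + G t * G'' t) * P t + 2 * G t * G' t * P' t
      - 3 / 2 * (2 * G t * G' t * P' t + G t ^ 2 * P'' t)) t := fun t =>
    ((((hG t).mul (hG' t)).const_mul 2).mul (hP t)).sub
      ((((hG t).pow 2).const_mul (3 / 2)).mul (hP' t)) |>.congr_deriv (by norm_num; ring)
  have hfirst : ∀ t, HasDerivAt (fun s => G s ^ 2 * P s ^ (-(3 / 2) : ℝ))
      (H t * P t ^ (-(3 / 2) - 1 : ℝ)) t := fun t =>
    ((hG t).pow 2).mul_rpow_const_of_pos (hP t) (hpos t)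
      |>.congr_deriv (by congr 1; norm_num [H]; ring)
  refine convexOn_of_hasDerivWithinAt2_nonneg convex_univ
    (fun t _ => (hfirst t).continuousAt.continuousWithinAt)
    (fun t _ => (hfirst t).hasDerivWithinAt)
    (fun t _ => ((hH t).mul_rpow_const_of_pos (hP t) (hpos t)).hasDerivWithinAt) ?_
  intro t _
  refine mul_nonneg ?_ (Real.rpow_nonneg (hpos t).le _)
  convert div_nonneg (hsecond t) (by norm_num : (0 : ℝ) ≤ 4) using 1
  simp only [H]; ring

theorem hasDerivAt_quadratic_line (α β z₁ z₂ w₁ w₂ t : ℝ) :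
    HasDerivAt (fun s => α * (z₁ + s * w₁) ^ 2 + β * (z₂ + s * w₂) ^ 2)
      (2 * (α * (z₁ + t * w₁) * w₁ + β * (z₂ + t * w₂) * w₂)) t := by
  have h₁ := ((hasDerivAt_id t).mul_const w₁).const_add z₁
  have h₂ := ((hasDerivAt_id t).mul_const w₂).const_add z₂
  exact ((h₁.pow 2).const_mul α).add ((h₂.pow 2).const_mul β) |>.congr_deriv (by simp; ring)

theorem hasDerivAt_quadratic_line_deriv (α β z₁ z₂ w₁ w₂ t : ℝ) :
    HasDerivAt (fun s => 2 * (α * (z₁ + s * w₁) * w₁ + β * (z₂ + s * w₂) * w₂))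
      (2 * (α * w₁ ^ 2 + β * w₂ ^ 2)) t := by
  have h₁ := ((hasDerivAt_id t).mul_const w₁).const_add z₁
  have h₂ := ((hasDerivAt_id t).mul_const w₂).const_add z₂
  exact (((h₁.const_mul α).mul_const w₁).add ((h₂.const_mul β).mul_const w₂)).const_mul 2
    |>.congr_deriv (by simp; ring)

theorem exists_pos_pow_four_lt {A B : ℝ} (hA : 0 < A) (h : 4 * B < 3 * A) :
    ∃ s > 0, (A + B * s) ^ 4 < A ^ 4 * (1 + s) ^ 3 := by
  let q : ℝ → ℝ := fun s =>
    A ^ 3 * (3 * A - 4 * B) + (3 * A ^ 4 - 6 * A ^ 2 * B ^ 2) * s + (A ^ 4 - 4 * A * B ^ 3) * s ^ 2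
      - B ^ 4 * s ^ 3
  have hq0 : 0 < q 0 := by simp only [q]; nlinarith [pow_pos hA 3]
  have hq : ∀ᶠ s in nhdsWithin 0 (Ioi 0), 0 < q s :=
    nhdsWithin_le_nhds ((by fun_prop : Continuous q).continuousAt.eventually (lt_mem_nhds hq0))
  obtain ⟨s, hqs, hs⟩ := (hq.and self_mem_nhdsWithin).exists
  refine ⟨s, hs, ?_⟩
  have : A ^ 4 * (1 + s) ^ 3 - (A + B * s) ^ 4 = s * q s := by simp only [q]; ring
  nlinarith [mul_pos (mem_Ioi.mp hs) hqs]

noncomputable def profile (lam u v : ℝ) : ℝ :=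
  ((1 + lam) * u ^ 2 + (1 - 2 * lam) * v ^ 2) ^ 2 * (u ^ 2 + v ^ 2) ^ (-(3 / 2) : ℝ)

namespace profile

variable (lam : ℝ)

theorem mul (c u v : ℝ) : profile lam (c * u) (c * v) = |c| * profile lam u v := by
  have hpow : (c ^ 2) ^ (-(3 / 2) : ℝ) = |c| ^ (-3 : ℝ) := by
    rw [← sq_abs, ← Real.rpow_natCast, ← Real.rpow_mul (abs_nonneg c)]
    norm_num
  have habs : |c| ^ 4 * |c| ^ (-3 : ℝ) = |c| := by
    rw [← Real.rpow_natCast, ← Real.rpow_add' (abs_nonneg c) (by norm_num)]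
    norm_num
  have hG : ((1 + lam) * (c * u) ^ 2 + (1 - 2 * lam) * (c * v) ^ 2) ^ 2
      = |c| ^ 4 * ((1 + lam) * u ^ 2 + (1 - 2 * lam) * v ^ 2) ^ 2 := by
    rw [Even.pow_abs (by decide)]; ring
  rw [profile, profile, hG, show (c * u) ^ 2 + (c * v) ^ 2 = c ^ 2 * (u ^ 2 + v ^ 2) by ring,
    Real.mul_rpow (sq_nonneg c) (by positivity), hpow]
  linear_combination ((1 + lam) * u ^ 2 + (1 - 2 * lam) * v ^ 2) ^ 2
    * (u ^ 2 + v ^ 2) ^ (-(3 / 2) : ℝ) * habs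

@[simp]
theorem neg_left (u v : ℝ) : profile lam (-u) v = profile lam u v := by simp [profile]

@[simp]
theorem neg_right (u v : ℝ) : profile lam u (-v) = profile lam u v := by simp [profile]

@[simp]
theorem abs_left (u v : ℝ) : profile lam |u| v = profile lam u v := by simp [profile]

theorem one_zero : profile lam 1 0 = (1 + lam) ^ 2 := by simp [profile]

theorem nonneg (u v : ℝ) : 0 ≤ profile lam u v := by unfold profile; positivity

theorem pos (h₁ : -1 < lam) (h₂ : lam < 1 / 2) {u v : ℝ} (huv : 0 < u ^ 2 + v ^ 2) :
    0 < profile lam u v := by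
  have hG : 0 < (1 + lam) * u ^ 2 + (1 - 2 * lam) * v ^ 2 := by
    have hA : 0 < 1 + lam := by linarith
    have hB : 0 < 1 - 2 * lam := by linarith
    nlinarith [mul_pos (mul_pos hA hB) huv, sq_nonneg ((1 + lam) * u),
      sq_nonneg ((1 - 2 * lam) * v)]
  unfold profile
  positivity

theorem eq_rpow_mul_sq {u v : ℝ} (huv : 0 < u ^ 2 + v ^ 2) :
    (u ^ 2 + v ^ 2) ^ ((1 : ℝ) / 2) * (1 + lam * (u ^ 2 - 2 * v ^ 2) / (u ^ 2 + v ^ 2)) ^ 2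
      = profile lam u v := by
  rw [profile, show (1 : ℝ) / 2 = 2 + -(3 / 2) by norm_num, Real.rpow_add huv]
  norm_cast
  field_simp
  ring

-- The coefficient of `a ^ 4` is `(1 - 11 λ) (1 + λ)`: this is where the bound `1 / 11` comes from.
theorem curvature_nonneg (h₀ : 0 ≤ lam) (h₁ : lam ≤ 1 / 11) (a b : ℝ) :
    0 ≤ (1 - 10 * lam - 11 * lam ^ 2) * a ^ 4 + 2 * (1 - lam + 52 * lam ^ 2) * a ^ 2 * b ^ 2
      + (1 + 8 * lam - 20 * lam ^ 2) * b ^ 4 := by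
  have c₁ : 0 ≤ 1 - 10 * lam - 11 * lam ^ 2 := by nlinarith
  have c₂ : 0 ≤ 1 - lam + 52 * lam ^ 2 := by nlinarith
  have c₃ : 0 ≤ 1 + 8 * lam - 20 * lam ^ 2 := by nlinarith
  have := mul_nonneg c₂ (sq_nonneg (a * b))
  have := mul_nonneg c₁ (sq_nonneg (a ^ 2))
  have := mul_nonneg c₃ (sq_nonneg (b ^ 2))
  nlinarith

theorem convexOn_line (h₀ : 0 ≤ lam) (h₁ : lam ≤ 1 / 11) {z₁ z₂ w₁ w₂ : ℝ}
    (hline : ∀ t : ℝ, 0 < (z₁ + t * w₁) ^ 2 + (z₂ + t * w₂) ^ 2) :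
    ConvexOn ℝ univ (fun t => profile lam (z₁ + t * w₁) (z₂ + t * w₂)) := by
  have := convexOn_univ_sq_mul_rpow_neg_three_halves
    (hasDerivAt_quadratic_line (1 + lam) (1 - 2 * lam) z₁ z₂ w₁ w₂)
    (hasDerivAt_quadratic_line_deriv (1 + lam) (1 - 2 * lam) z₁ z₂ w₁ w₂)
    (hasDerivAt_quadratic_line 1 1 z₁ z₂ w₁ w₂) (hasDerivAt_quadratic_line_deriv 1 1 z₁ z₂ w₁ w₂)
    (by simpa using hline) fun t => ?_
  · simpa [profile] using this
  set a := z₁ + t * w₁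
  set b := z₂ + t * w₂
  have key := mul_nonneg (curvature_nonneg lam h₀ h₁ a b) (sq_nonneg (b * w₁ - a * w₂))
  linear_combination 4 * key

theorem convexOn (h₀ : 0 ≤ lam) (h₁ : lam ≤ 1 / 11) :
    ConvexOn ℝ univ (fun p : ℝ × ℝ => profile lam p.1 p.2) := by
  refine ⟨convex_univ, ?_⟩
  rintro ⟨u₁, v₁⟩ - ⟨u₂, v₂⟩ - a b ha hb hab
  obtain rfl : a = 1 - b := by linarith
  simp only [Prod.smul_mk, Prod.mk_add_mk, smul_eq_mul]
  by_cases hline : ∀ t : ℝ, 0 < (u₁ + t * (u₂ - u₁)) ^ 2 + (v₁ + t * (v₂ - v₁)) ^ 2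
  · have := (convexOn_line lam h₀ h₁ hline).2 (mem_univ 0) (mem_univ 1) ha hb hab
    convert this using 2 <;> simp only [smul_eq_mul] <;> ring_nf
  · -- The line through the two points meets the origin, and `profile` is homogeneous along it.
    push Not at hline
    obtain ⟨t₀, ht₀⟩ := hline
    obtain ⟨d₁, hd₁⟩ : ∃ d, d = u₂ - u₁ := ⟨_, rfl⟩
    obtain ⟨d₂, hd₂⟩ : ∃ d, d = v₂ - v₁ := ⟨_, rfl⟩
    rw [← hd₁, ← hd₂] at ht₀
    have hu : u₁ + t₀ * d₁ = 0 := by nlinarith [sq_nonneg (u₁ + t₀ * d₁), sq_nonneg (v₁ + t₀ * d₂)]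
    have hv : v₁ + t₀ * d₂ = 0 := by nlinarith [sq_nonneg (u₁ + t₀ * d₁), sq_nonneg (v₁ + t₀ * d₂)]
    have habs : |b - t₀| ≤ (1 - b) * |-t₀| + b * |1 - t₀| := by
      calc |b - t₀| = |(1 - b) * -t₀ + b * (1 - t₀)| := by ring_nf
        _ ≤ |(1 - b) * -t₀| + |b * (1 - t₀)| := abs_add_le _ _
        _ = _ := by rw [abs_mul, abs_mul, abs_of_nonneg ha, abs_of_nonneg hb]
    calc profile lam ((1 - b) * u₁ + b * u₂) ((1 - b) * v₁ + b * v₂)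
        = |b - t₀| * profile lam d₁ d₂ := by
          rw [← mul]
          congr 1
          · linear_combination hu - b * hd₁
          · linear_combination hv - b * hd₂
      _ ≤ ((1 - b) * |-t₀| + b * |1 - t₀|) * profile lam d₁ d₂ := by
          gcongr; exact nonneg lam d₁ d₂
      _ = (1 - b) * profile lam u₁ v₁ + b * profile lam u₂ v₂ := by
          rw [show u₁ = -t₀ * d₁ by linarith, show v₁ = -t₀ * d₂ by linarith,
            show u₂ = (1 - t₀) * d₁ by linarith, show v₂ = (1 - t₀) * d₂ by linarith, mul, mul]
          ring

theorem add_le (h₀ : 0 ≤ lam) (h₁ : lam ≤ 1 / 11) (u₁ v₁ u₂ v₂ : ℝ) :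
    profile lam (u₁ + u₂) (v₁ + v₂) ≤ profile lam u₁ v₁ + profile lam u₂ v₂ := by
  have := (convexOn lam h₀ h₁).2 (mem_univ (u₁, v₁)) (mem_univ (u₂, v₂))
    (by norm_num : (0 : ℝ) ≤ 1 / 2) (by norm_num : (0 : ℝ) ≤ 1 / 2) (by norm_num)
  simp only [Prod.smul_mk, Prod.mk_add_mk, smul_eq_mul, ← mul_add, mul] at this
  norm_num at this
  linarith

theorem le_of_abs_le (h₀ : 0 ≤ lam) (h₁ : lam ≤ 1 / 11) {u' u : ℝ} (v : ℝ) (h : |u'| ≤ |u|) :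
    profile lam u' v ≤ profile lam u v := by
  have hmem : (u', v) ∈ segment ℝ (-|u|, v) (|u|, v) := by
    rw [← Prod.image_mk_segment_left, segment_eq_Icc (by simp)]
    exact ⟨u', abs_le.mp h, rfl⟩
  simpa using (convexOn lam h₀ h₁).le_max_of_mem_segment (mem_univ _) (mem_univ _) hmem

theorem exists_lt_one_zero (h : 1 / 11 < lam) : ∃ t, profile lam 1 t < profile lam 1 0 := by
  obtain ⟨s, hs, hlt⟩ :=
    exists_pos_pow_four_lt (A := 1 + lam) (B := 1 - 2 * lam) (by linarith) (by linarith)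
  refine ⟨√s, ?_⟩
  rw [one_zero, profile, one_pow, mul_one, Real.sq_sqrt hs.le, Real.rpow_neg (by positivity),
    ← div_eq_mul_inv, div_lt_iff₀ (by positivity)]
  have hcube : ((1 + s) ^ (3 / 2 : ℝ)) ^ 2 = (1 + s) ^ 3 := by
    rw [← Real.rpow_natCast, ← Real.rpow_mul (by positivity)]
    norm_num
  refine lt_of_pow_lt_pow_left₀ 2 (by positivity) ?_
  calc _ = ((1 + lam) + (1 - 2 * lam) * s) ^ 4 := by ring
    _ < (1 + lam) ^ 4 * (1 + s) ^ 3 := hlt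
    _ = _ := by rw [mul_pow, hcube]; ring

end profile

theorem sqrt_sum_add_sq_le {ι : Type*} (s : Finset ι) (x y : ι → ℝ) :
    √(∑ i ∈ s, (x i + y i) ^ 2) ≤ √(∑ i ∈ s, x i ^ 2) + √(∑ i ∈ s, y i ^ 2) := by
  have hnorm (z : ι → ℝ) :
      √(∑ i ∈ s, z i ^ 2) = ‖(WithLp.toLp 2 (fun i : s => z i) : EuclideanSpace ℝ s)‖ := by
    simp [EuclideanSpace.norm_eq, Finset.sum_attach s (fun i => z i ^ 2)]
  have := norm_add_le (WithLp.toLp 2 (fun i : s => x i) : EuclideanSpace ℝ s)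
    (WithLp.toLp 2 fun i : s => y i)
  rw [← WithLp.toLp_add] at this
  rw [hnorm x, hnorm y]
  exact (hnorm (x + y)).trans_le this

theorem sum_sq_pos_of_ne_zero {ι : Type*} [Fintype ι] {x : ι → ℝ} (hx : x ≠ 0) :
    0 < ∑ i, x i ^ 2 := by
  obtain ⟨i, hi⟩ := Function.ne_iff.mp hx
  exact Finset.sum_pos' (fun _ _ => sq_nonneg _) ⟨i, Finset.mem_univ i, pow_two_pos_of_ne_zero hi⟩

section revolvedProfile

variable {ι : Type*} [Fintype ι] [DecidableEq ι]

noncomputable def revolvedProfile (lam : ℝ) (j : ι) (x : ι → ℝ) : ℝ :=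
  profile lam √(∑ i ∈ Finset.univ.erase j, x i ^ 2) (x j)

variable (lam : ℝ) (j : ι)

theorem sq_sqrt_sum_erase_add_sq (x : ι → ℝ) :
    √(∑ i ∈ Finset.univ.erase j, x i ^ 2) ^ 2 + x j ^ 2 = ∑ i, x i ^ 2 := by
  rw [Real.sq_sqrt (Finset.sum_nonneg fun _ _ => sq_nonneg _),
    Finset.sum_erase_add _ _ (Finset.mem_univ j)]

theorem revolvedProfile_eq {x : ι → ℝ} (hx : x ≠ 0) :
    revolvedProfile lam j x = (∑ i, x i ^ 2) ^ ((1 : ℝ) / 2) *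
      (1 + lam * ((∑ i ∈ Finset.univ.erase j, x i ^ 2) - 2 * x j ^ 2) / (∑ i, x i ^ 2)) ^ 2 := by
  have hpos := sum_sq_pos_of_ne_zero hx
  rw [← sq_sqrt_sum_erase_add_sq j x] at hpos ⊢
  rw [revolvedProfile, ← profile.eq_rpow_mul_sq lam hpos,
    Real.sq_sqrt (Finset.sum_nonneg fun _ _ => sq_nonneg _)]

theorem revolvedProfile_zero : revolvedProfile lam j 0 = 0 := by
  simp [revolvedProfile, profile]

theorem revolvedProfile_eq_zero_iff (h₁ : -1 < lam) (h₂ : lam < 1 / 2) {x : ι → ℝ} :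
    revolvedProfile lam j x = 0 ↔ x = 0 := by
  refine ⟨fun h => by_contra fun hx => ?_, fun hx => hx ▸ revolvedProfile_zero lam j⟩
  have hpos := sum_sq_pos_of_ne_zero hx
  rw [← sq_sqrt_sum_erase_add_sq j x] at hpos
  exact (profile.pos lam h₁ h₂ hpos).ne' h

theorem revolvedProfile_smul (c : ℝ) (x : ι → ℝ) :
    revolvedProfile lam j (c • x) = |c| * revolvedProfile lam j x := by
  simp only [revolvedProfile, Pi.smul_apply, smul_eq_mul, mul_pow, ← Finset.mul_sum,
    Real.sqrt_mul (sq_nonneg c), Real.sqrt_sq_eq_abs, ← profile.mul]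
  simp [profile, mul_pow]

theorem revolvedProfile_add_le (h₀ : 0 ≤ lam) (h₁ : lam ≤ 1 / 11) (x y : ι → ℝ) :
    revolvedProfile lam j (x + y) ≤ revolvedProfile lam j x + revolvedProfile lam j y := by
  calc revolvedProfile lam j (x + y)
      ≤ profile lam (√(∑ i ∈ Finset.univ.erase j, x i ^ 2) + √(∑ i ∈ Finset.univ.erase j, y i ^ 2))
          (x j + y j) := by
        refine profile.le_of_abs_le lam h₀ h₁ _ ?_
        rw [abs_of_nonneg (Real.sqrt_nonneg _), abs_of_nonneg (by positivity)]
        exact sqrt_sum_add_sq_le _ x y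
    _ ≤ _ := profile.add_le lam h₀ h₁ _ _ _ _

theorem revolvedProfile_single_add_single {i : ι} (hij : i ≠ j) (a b : ℝ) :
    revolvedProfile lam j (Pi.single i a + Pi.single j b) = profile lam a b := by
  have hsum : ∑ k ∈ Finset.univ.erase j, (Pi.single i a k + Pi.single j b k) ^ 2 = a ^ 2 := by
    rw [Finset.sum_eq_single_of_mem i (Finset.mem_erase.2 ⟨hij, Finset.mem_univ i⟩)
      fun k hk hki => by simp [hki, Finset.ne_of_mem_erase hk]]
    simp [hij]
  simp [revolvedProfile, hsum, Real.sqrt_sq_eq_abs, hij.symm]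

theorem exists_add_lt_revolvedProfile_add (h : 1 / 11 < lam) {i : ι} (hij : i ≠ j) :
    ∃ x y, revolvedProfile lam j x + revolvedProfile lam j y < revolvedProfile lam j (x + y) := by
  obtain ⟨t, ht⟩ := profile.exists_lt_one_zero lam h
  refine ⟨Pi.single i 1 + Pi.single j t, Pi.single i 1 + Pi.single j (-t), ?_⟩
  rw [add_add_add_comm, ← Pi.single_add, ← Pi.single_add]
  simp only [revolvedProfile_single_add_single lam j hij, profile.neg_right, add_neg_cancel,
    one_add_one_eq_two]
  have h2 := profile.mul lam 2 1 0
  norm_num at h2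
  linarith

end revolvedProfile

theorem stmt6 (n : ℕ) (hn : 2 ≤ n) (lam : ℝ) (hlam : 0 < lam)
    (N : (Fin n → ℝ) → ℝ)
    (hN : ∀ x : Fin n → ℝ, x ≠ 0 →
      N x = (∑ i, x i ^ 2) ^ ((1 : ℝ) / 2) *
        (1 + lam * ((∑ i ∈ Finset.univ.erase ⟨n - 1, by omega⟩, x i ^ 2)
            - 2 * x ⟨n - 1, by omega⟩ ^ 2) / (∑ i, x i ^ 2)) ^ 2)
    (hN0 : N 0 = 0) :
    ((∀ x, N x = 0 ↔ x = 0) ∧ (∀ (c : ℝ) (x), N (c • x) = |c| * N x) ∧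
      (∀ x y, N (x + y) ≤ N x + N y)) ↔ lam ≤ 1 / 11 := by
  set j : Fin n := ⟨n - 1, by omega⟩
  obtain rfl : N = revolvedProfile lam j := by
    funext x
    rcases eq_or_ne x 0 with rfl | hx
    · rw [hN0, revolvedProfile_zero]
    · rw [hN x hx, revolvedProfile_eq lam j hx]
  constructor
  · rintro ⟨-, -, hadd⟩
    by_contra! hlt
    have h0j : (⟨0, by omega⟩ : Fin n) ≠ j := Fin.ne_of_val_ne (by simp [j]; omega)
    obtain ⟨x, y, hxy⟩ := exists_add_lt_revolvedProfile_add lam j hlt h0j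
    exact (hadd x y).not_gt hxy
  · intro hle
    exact ⟨fun x => revolvedProfile_eq_zero_iff lam j (by linarith) (by linarith),
      revolvedProfile_smul lam j, revolvedProfile_add_le lam j hlam.le hle⟩
end
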